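/- Let φ ∈ K(z) be a rational function with simple good reduction outside S, and let P ∈ P^1(K) be a periodic point for φ with minimal period n. Let i, j ∈ ℕ be such that gcd(i − j, n) = 1. Then for every place p ∉ S, one has δ_p(φ^i(P), φ^j(P)) = δ_p(φ(P), P). -/

import Mathlib

open Polynomial

noncomputable section

open scoped Classical

/-- The places of the rational function field `k(t)`: the finite place attached to `t - α`
for `α ∈ k`, together with the place at infinity. -/
inductive Place (k : Type*) : Type _ where
  | finite (α : k) : Place k
  | infinity : Place k

variable {k : Type*} [Field k]

/-- The normalized additive valuation `v_p : k(t) → ℤ` attached to a place `p`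
(with junk value `0` at `x = 0`). -/
def placeVal : Place k → RatFunc k → ℤ
  | Place.finite α, x =>
      (Polynomial.rootMultiplicity α (RatFunc.num x) : ℤ)
        - (Polynomial.rootMultiplicity α (RatFunc.denom x) : ℤ)
  | Place.infinity, x => - RatFunc.intDegree x

/-- The valuation with value `⊤` at `0`. -/
def placeValT (p : Place k) (x : RatFunc k) : WithTop ℤ :=
  if x = 0 then ⊤ else (placeVal p x : WithTop ℤ)

/-- The ring of S-integers `R_S`. -/
def SInt (S : Finset (Place k)) : Set (RatFunc k) :=
  {x | ∀ p ∉ S, 0 ≤ placeValT p x}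

/-- The group of S-units `R_S*`. -/
def SUnit (S : Finset (Place k)) : Set (RatFunc k) :=
  {x | ∀ p ∉ S, placeValT p x = 0}

/-- Canonical homogeneous coordinates on `P^1(F) = F ∪ {∞}`. -/
def coords {F : Type*} [Field F] : Option F → F × F
  | none => (1, 0)
  | some x => (x, 1)

/-- The `p`-adic logarithmic distance between two points of `P^1(k(t))`. -/
def logDist (p : Place k) (P Q : Option (RatFunc k)) : WithTop ℤ :=
  placeValT p ((coords P).1 * (coords Q).2 - (coords Q).1 * (coords P).2)
    + (((- min (placeVal p (coords P).1) (placeVal p (coords P).2))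
        - min (placeVal p (coords Q).1) (placeVal p (coords Q).2) : ℤ) : WithTop ℤ)

/-- The self-map of `P^1(F) = F ∪ {∞}` induced by the rational function `f/g` of degree `d`;
in homogeneous coordinates `[x : y]` is sent to `[F*(x,y) : G*(x,y)]` where `F*`, `G*` are the
degree-`d` homogenizations of `f` and `g`. -/
def ratApply {F : Type*} [Field F] (f g : Polynomial F) (d : ℕ) :
    Option F → Option F
  | none =>
      if Polynomial.coeff g d = 0 then none
      else some (Polynomial.coeff f d / Polynomial.coeff g d)
  | some x =>
      if Polynomial.eval x g = 0 then none
      else some (Polynomial.eval x f / Polynomial.eval x g)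

/-- The Möbius transformation of `P^1(F)` attached to a `2 × 2` matrix. -/
def moebius {F : Type*} [Field F] (M : Matrix (Fin 2) (Fin 2) F) :
    Option F → Option F
  | none => if M 1 0 = 0 then none else some (M 0 0 / M 1 0)
  | some x =>
      if M 1 0 * x + M 1 1 = 0 then none
      else some ((M 0 0 * x + M 0 1) / (M 1 0 * x + M 1 1))

/-- `φ` is isotrivial over `K = k(t)` if some conjugate `A ∘ φ ∘ A⁻¹` by an element
`A ∈ PGL_2(K)` is given by a rational function all of whose coefficients lie in `k`. -/
def IsIsotrivial (φ : Option (RatFunc k) → Option (RatFunc k)) : Prop :=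
  ∃ M : Matrix (Fin 2) (Fin 2) (RatFunc k), M.det ≠ 0 ∧
    ∃ F G : Polynomial k, IsCoprime F G ∧
      moebius M ∘ φ ∘ moebius M⁻¹ =
        ratApply (F.map (RatFunc.C : k →+* RatFunc k))
          (G.map (RatFunc.C : k →+* RatFunc k)) (max F.natDegree G.natDegree)

/-- The homogeneous resultant of the degree-`d` homogenizations of `f` and `g`, as the
determinant of the `2d × 2d` Sylvester matrix. -/
def hResultant {F : Type*} [Field F] (d : ℕ) (f g : Polynomial F) : F :=
  Matrix.det (Matrix.of fun i j : Fin (d + d) =>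
    if (i : ℕ) < d then
      (if (i : ℕ) ≤ (j : ℕ) ∧ (j : ℕ) ≤ (i : ℕ) + d then f.coeff (d + (i : ℕ) - (j : ℕ)) else 0)
    else
      (if (i : ℕ) - d ≤ (j : ℕ) ∧ (j : ℕ) ≤ (i : ℕ) then g.coeff ((i : ℕ) - (j : ℕ)) else 0))

/-- `(f, g)` is an S-reduced integral pair: all coefficients are S-integers and they have no
common non-unit factor in `R_S`. -/
def SReducedPair (S : Finset (Place k)) (f g : Polynomial (RatFunc k)) : Prop :=
  (∀ n, f.coeff n ∈ SInt S) ∧ (∀ n, g.coeff n ∈ SInt S) ∧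
    ∀ r : RatFunc k, r ≠ 0 → r ∈ SInt S →
      (∀ n, f.coeff n / r ∈ SInt S) → (∀ n, g.coeff n / r ∈ SInt S) → r ∈ SUnit S

/-- `φ = f/g` (of degree `d`) has simple good reduction at the place `p ∉ S`: written in
S-reduced integral form, the homogeneous resultant has `v_p` equal to `0`. -/
def HasSimpleGoodReductionAt (S : Finset (Place k)) (p : Place k)
    (f g : Polynomial (RatFunc k)) (d : ℕ) : Prop :=
  ∃ c : RatFunc k, c ≠ 0 ∧ SReducedPair S (Polynomial.C c * f) (Polynomial.C c * g) ∧
    placeValT p (hResultant d (Polynomial.C c * f) (Polynomial.C c * g)) = 0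

/-- `φ = f/g` (of degree `d`) has simple good reduction outside `S`: written in S-reduced
integral form, the homogeneous resultant is an S-unit. -/
def HasSimpleGoodReductionOutside (S : Finset (Place k))
    (f g : Polynomial (RatFunc k)) (d : ℕ) : Prop :=
  ∃ c : RatFunc k, c ≠ 0 ∧ SReducedPair S (Polynomial.C c * f) (Polynomial.C c * g) ∧
    hResultant d (Polynomial.C c * f) (Polynomial.C c * g) ∈ SUnit S

/-- `φ` has good reduction at `p` if some conjugate of `φ` by an element of `PGL_2(K)`
has simple good reduction at `p`. -/
def HasGoodReductionAt (S : Finset (Place k)) (p : Place k)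
    (φ : Option (RatFunc k) → Option (RatFunc k)) (d : ℕ) : Prop :=
  ∃ M : Matrix (Fin 2) (Fin 2) (RatFunc k), M.det ≠ 0 ∧
    ∃ F G : Polynomial (RatFunc k), IsCoprime F G ∧ max F.natDegree G.natDegree = d ∧
      moebius M ∘ φ ∘ moebius M⁻¹ = ratApply F G d ∧
      HasSimpleGoodReductionAt S p F G d

/-- `φ` has good reduction outside `S` if it has good reduction at every place `p ∉ S`. -/
def HasGoodReductionOutside (S : Finset (Place k))
    (φ : Option (RatFunc k) → Option (RatFunc k)) (d : ℕ) : Prop :=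
  ∀ p ∉ S, HasGoodReductionAt S p φ d

/-- The quantity `b(d,s) = ((9^(s-1)+1)/2)(2d+1) + 2`. -/
def bnd (d s : ℕ) : ℕ := (9 ^ (s - 1) + 1) / 2 * (2 * d + 1) + 2

/-- The bound `C(d,s)` of Theorem 2: the product over primes `p ≤ b(d,s)` of
`max{b(d,s), p·3^(2s-1)}`. -/
def periodBound (d s : ℕ) : ℕ :=
  ∏ p ∈ Finset.filter Nat.Prime (Finset.range (bnd d s + 1)),
    max (bnd d s) (p * 3 ^ (2 * s - 1))

end

noncomputable section Val

open Polynomial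

variable {k : Type*} [Field k]

local notation "K" => RatFunc k

lemma placeVal_finite_def (α : k) (x : K) :
    placeVal (Place.finite α) x
      = (rootMultiplicity α x.num : ℤ) - rootMultiplicity α x.denom := rfl

lemma placeVal_inf_def (x : K) :
    placeVal (Place.infinity : Place k) x = - x.intDegree := rfl

lemma placeValT_eq (p : Place k) {x : K} (hx : x ≠ 0) :
    placeValT p x = (placeVal p x : WithTop ℤ) := if_neg hx

lemma placeValT_zero (p : Place k) : placeValT p (0 : K) = ⊤ := if_pos rfl

lemma placeValT_eq_top_iff {p : Place k} {x : K} : placeValT p x = ⊤ ↔ x = 0 := by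
  constructor
  · intro h
    by_contra hx
    rw [placeValT_eq p hx] at h
    exact WithTop.coe_ne_top h
  · intro h; rw [h]; exact placeValT_zero p

lemma placeVal_one (p : Place k) : placeVal p (1 : K) = 0 := by
  cases p with
  | finite α =>
      rw [placeVal_finite_def, RatFunc.num_one, RatFunc.denom_one,
        rootMultiplicity_eq_zero (by simp [IsRoot])]
      simp
  | infinity => rw [placeVal_inf_def, RatFunc.intDegree_one, neg_zero]

lemma placeValT_one (p : Place k) : placeValT p (1 : K) = 0 := by
  rw [placeValT_eq p one_ne_zero, placeVal_one]; rfl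

lemma placeVal_mul (p : Place k) {x y : K} (hx : x ≠ 0) (hy : y ≠ 0) :
    placeVal p (x * y) = placeVal p x + placeVal p y := by
  cases p with
  | finite α =>
      have h := RatFunc.num_denom_mul x y
      have hxy : x * y ≠ 0 := mul_ne_zero hx hy
      have e1 : rootMultiplicity α ((x*y).num * (x.denom * y.denom))
          = rootMultiplicity α (x.num * y.num * (x*y).denom) := by rw [h]
      rw [rootMultiplicity_mul (mul_ne_zero (RatFunc.num_ne_zero hxy)
          (mul_ne_zero x.denom_ne_zero y.denom_ne_zero)),
        rootMultiplicity_mul (mul_ne_zero (mul_ne_zero (RatFunc.num_ne_zero hx)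
          (RatFunc.num_ne_zero hy)) (x*y).denom_ne_zero),
        rootMultiplicity_mul (mul_ne_zero x.denom_ne_zero y.denom_ne_zero),
        rootMultiplicity_mul (mul_ne_zero (RatFunc.num_ne_zero hx) (RatFunc.num_ne_zero hy))]
        at e1
      simp only [placeVal_finite_def]
      omega
  | infinity =>
      simp only [placeVal_inf_def, RatFunc.intDegree_mul hx hy]; ring

lemma placeValT_mul (p : Place k) (x y : K) :
    placeValT p (x * y) = placeValT p x + placeValT p y := by
  by_cases hx : x = 0
  · simp [hx, placeValT_zero]
  by_cases hy : y = 0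
  · simp [hy, placeValT_zero]
  rw [placeValT_eq p hx, placeValT_eq p hy, placeValT_eq p (mul_ne_zero hx hy),
    placeVal_mul p hx hy]
  exact_mod_cast rfl

lemma placeValT_add (p : Place k) (x y : K) :
    min (placeValT p x) (placeValT p y) ≤ placeValT p (x + y) := by
  by_cases hx : x = 0
  · simp [hx, placeValT_zero]
  by_cases hy : y = 0
  · simp [hy, placeValT_zero]
  by_cases hxy : x + y = 0
  · rw [hxy, placeValT_zero]; exact le_top
  rw [placeValT_eq p hx, placeValT_eq p hy, placeValT_eq p hxy]
  have : min (placeVal p x) (placeVal p y) ≤ placeVal p (x + y) := by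
    cases p with
    | finite α =>
        have h := RatFunc.num_denom_add x y
        have hs : x.num * y.denom + x.denom * y.num ≠ 0 := by
          intro h0
          rw [h0, zero_mul] at h
          exact RatFunc.num_ne_zero hxy (by
            have := mul_ne_zero x.denom_ne_zero y.denom_ne_zero
            exact (mul_eq_zero.mp h).resolve_right this)
        have e1 : rootMultiplicity α ((x+y).num * (x.denom * y.denom))
            = rootMultiplicity α ((x.num * y.denom + x.denom * y.num) * (x+y).denom) := by
          rw [h]
        rw [rootMultiplicity_mul (mul_ne_zero (RatFunc.num_ne_zero hxy)
            (mul_ne_zero x.denom_ne_zero y.denom_ne_zero)),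
          rootMultiplicity_mul (mul_ne_zero hs (x+y).denom_ne_zero),
          rootMultiplicity_mul (mul_ne_zero x.denom_ne_zero y.denom_ne_zero)] at e1
        have e2 : min (rootMultiplicity α (x.num * y.denom))
            (rootMultiplicity α (x.denom * y.num)) ≤ rootMultiplicity α
              (x.num * y.denom + x.denom * y.num) := by
          rw [le_rootMultiplicity_iff hs]
          exact dvd_add
            (dvd_trans (pow_dvd_pow _ (min_le_left _ _))
              (pow_rootMultiplicity_dvd _ α))
            (dvd_trans (pow_dvd_pow _ (min_le_right _ _))
              (pow_rootMultiplicity_dvd _ α))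
        rw [rootMultiplicity_mul (mul_ne_zero (RatFunc.num_ne_zero hx) y.denom_ne_zero),
          rootMultiplicity_mul (mul_ne_zero x.denom_ne_zero (RatFunc.num_ne_zero hy))] at e2
        simp only [placeVal_finite_def, le_min_iff, min_le_iff] at *
        omega
    | infinity =>
        have h := RatFunc.intDegree_add_le hy hxy
        simp only [placeVal_inf_def, le_min_iff, min_le_iff, le_max_iff] at *
        omega
  exact_mod_cast this

lemma placeValT_neg (p : Place k) (x : K) : placeValT p (-x) = placeValT p x := by
  have hm : placeValT p ((-1 : K) * (-1)) = placeValT p (-1 : K) + placeValT p (-1) :=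
    placeValT_mul p _ _
  have h1 : placeValT p ((-1 : K) * (-1)) = 0 := by rw [neg_mul_neg, one_mul, placeValT_one]
  have hne : (-1 : K) ≠ 0 := by norm_num
  rw [placeValT_eq p hne] at hm
  have hv : placeVal p (-1 : K) = 0 := by
    rw [hm, ← WithTop.coe_add] at h1
    have h2 : placeVal p (-1 : K) + placeVal p (-1 : K) = 0 := by exact_mod_cast h1
    omega
  have hx' : -x = (-1 : K) * x := by ring
  rw [hx', placeValT_mul, placeValT_eq p hne, hv]
  simp

lemma placeValT_sub (p : Place k) (x y : K) :
    min (placeValT p x) (placeValT p y) ≤ placeValT p (x - y) := by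
  rw [sub_eq_add_neg, ← placeValT_neg p y]
  exact placeValT_add p x (-y)

lemma placeValT_pow (p : Place k) (x : K) (m : ℕ) :
    placeValT p (x ^ m) = m • placeValT p x := by
  induction m with
  | zero => simpa using placeValT_one p
  | succ m ih =>
      rw [pow_succ, placeValT_mul, ih, succ_nsmul]

lemma placeValT_pow_nonneg (p : Place k) {x : K} (hx : 0 ≤ placeValT p x) (m : ℕ) :
    0 ≤ placeValT p (x ^ m) := by
  rw [placeValT_pow]
  exact nsmul_nonneg hx m

lemma le_placeValT_sum (p : Place k) {ι : Type*} (s : Finset ι) (F : ι → K)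
    {c : WithTop ℤ} (h : ∀ i ∈ s, c ≤ placeValT p (F i)) :
    c ≤ placeValT p (∑ i ∈ s, F i) := by
  classical
  induction s using Finset.induction_on with
  | empty => simp [placeValT_zero]
  | @insert a s' ha ih =>
      rw [Finset.sum_insert ha]
      refine le_trans ?_ (placeValT_add p _ _)
      exact le_min (h a (Finset.mem_insert_self a s'))
        (ih fun i hi => h i (Finset.mem_insert_of_mem hi))

end Val

noncomputable section Rep

open Polynomial
open scoped Classical

variable {k : Type*} [Field k]

local notation "K" => RatFunc k

lemma placeVal_zero (p : Place k) : placeVal p (0 : K) = 0 := by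
  cases p with
  | finite α =>
      rw [placeVal_finite_def, RatFunc.num_zero, RatFunc.denom_zero, rootMultiplicity_zero,
        rootMultiplicity_eq_zero (by simp [IsRoot])]
      simp
  | infinity => rw [placeVal_inf_def, RatFunc.intDegree_zero, neg_zero]

lemma placeVal_inv (p : Place k) {x : K} (hx : x ≠ 0) :
    placeVal p x⁻¹ = - placeVal p x := by
  have h := placeVal_mul p hx (inv_ne_zero hx)
  rw [mul_inv_cancel₀ hx, placeVal_one] at h
  omega

lemma placeVal_pow (p : Place k) {x : K} (hx : x ≠ 0) (m : ℕ) :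
    placeVal p (x ^ m) = m * placeVal p x := by
  induction m with
  | zero => simpa using placeVal_one p
  | succ m ih =>
      rw [pow_succ, placeVal_mul p (pow_ne_zero m hx) hx, ih]
      push_cast; ring

lemma exists_uniformizer (p : Place k) : ∃ π : K, π ≠ 0 ∧ placeVal p π = 1 := by
  cases p with
  | finite α =>
      refine ⟨algebraMap k[X] K (X - C α), RatFunc.algebraMap_ne_zero (X_sub_C_ne_zero α), ?_⟩
      rw [placeVal_finite_def, RatFunc.num_algebraMap, RatFunc.denom_algebraMap,
        rootMultiplicity_X_sub_C_self, rootMultiplicity_eq_zero (by simp [IsRoot])]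
      simp
  | infinity =>
      have hX : (RatFunc.X : K) ≠ 0 := by
        intro h
        have h2 : (RatFunc.X : K).intDegree = 1 := RatFunc.intDegree_X
        rw [h, RatFunc.intDegree_zero] at h2
        omega
      refine ⟨(RatFunc.X : K)⁻¹, inv_ne_zero hX, ?_⟩
      rw [placeVal_inv _ hX, placeVal_inf_def, RatFunc.intDegree_X]
      norm_num

lemma exists_elt_val (p : Place k) (m : ℤ) : ∃ u : K, u ≠ 0 ∧ placeVal p u = m := by
  obtain ⟨π, hπ, hv⟩ := exists_uniformizer p
  refine ⟨π ^ m.toNat * (π ^ (-m).toNat)⁻¹,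
    mul_ne_zero (pow_ne_zero _ hπ) (inv_ne_zero (pow_ne_zero _ hπ)), ?_⟩
  rw [placeVal_mul p (pow_ne_zero _ hπ) (inv_ne_zero (pow_ne_zero _ hπ)),
    placeVal_inv p (pow_ne_zero _ hπ), placeVal_pow p hπ, placeVal_pow p hπ, hv]
  omega

/-- The corrected min of valuations of a coordinate pair. -/
def nmin (p : Place k) (x y : K) : ℤ :=
  if x = 0 then placeVal p y else if y = 0 then placeVal p x
  else min (placeVal p x) (placeVal p y)

/-- Logarithmic distance in terms of coordinate pairs. -/
def pdist (p : Place k) (u w : K × K) : WithTop ℤ :=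
  placeValT p (u.1 * w.2 - w.1 * u.2)
    + ((- nmin p u.1 u.2 - nmin p w.1 w.2 : ℤ) : WithTop ℤ)

lemma min_coords_eq_nmin (p : Place k) (P : Option K) :
    min (placeVal p (coords P).1) (placeVal p (coords P).2)
      = nmin p (coords P).1 (coords P).2 := by
  cases P with
  | none =>
      simp [coords, nmin, placeVal_zero, placeVal_one]
  | some x =>
      by_cases hx : x = 0 <;>
        simp [coords, nmin, hx, placeVal_zero, placeVal_one]

lemma logDist_eq_pdist (p : Place k) (P Q : Option K) :
    logDist p P Q = pdist p (coords P) (coords Q) := by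
  rw [logDist, pdist, min_coords_eq_nmin, min_coords_eq_nmin]

lemma nmin_le_left (p : Place k) {x : K} (y : K) (hx : x ≠ 0) :
    nmin p x y ≤ placeVal p x := by
  by_cases hy : y = 0 <;> simp [nmin, hx, hy, min_le_left]

lemma nmin_le_right (p : Place k) (x : K) {y : K} (hy : y ≠ 0) :
    nmin p x y ≤ placeVal p y := by
  by_cases hx : x = 0 <;> simp [nmin, hx, hy, min_le_right]

lemma nmin_smul (p : Place k) {c x y : K} (hc : c ≠ 0) (h : ¬(x = 0 ∧ y = 0)) :
    nmin p (c * x) (c * y) = placeVal p c + nmin p x y := by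
  by_cases hx : x = 0
  · have hy : y ≠ 0 := fun hy => h ⟨hx, hy⟩
    simp [nmin, hx, hy, mul_ne_zero hc hy, placeVal_mul p hc hy]
  by_cases hy : y = 0
  · simp [nmin, hx, hy, mul_ne_zero hc hx, placeVal_mul p hc hx]
  · simp only [nmin, if_neg (mul_ne_zero hc hx), if_neg (mul_ne_zero hc hy),
      if_neg hx, if_neg hy, placeVal_mul p hc hx, placeVal_mul p hc hy]
    omega

lemma coe_shift (A : WithTop ℤ) (c b : ℤ) : ((c : WithTop ℤ) + A) + ((b - c : ℤ) : WithTop ℤ)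
    = A + (b : WithTop ℤ) := by
  cases A using WithTop.recTopCoe with
  | top => simp
  | coe a =>
      rw [← WithTop.coe_add, ← WithTop.coe_add, ← WithTop.coe_add]
      congr 1
      ring

lemma pdist_smul_left (p : Place k) {c : K} (hc : c ≠ 0) {u : K × K}
    (h : ¬(u.1 = 0 ∧ u.2 = 0)) (w : K × K) :
    pdist p (c * u.1, c * u.2) w = pdist p u w := by
  have hcross : (c * u.1) * w.2 - w.1 * (c * u.2) = c * (u.1 * w.2 - w.1 * u.2) := by ring
  rw [pdist, pdist]
  simp only [hcross]
  rw [placeValT_mul, placeValT_eq p hc, nmin_smul p hc h]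
  have : (-(placeVal p c + nmin p u.1 u.2) - nmin p w.1 w.2 : ℤ)
      = (- nmin p u.1 u.2 - nmin p w.1 w.2) - placeVal p c := by ring
  rw [this]
  exact coe_shift _ _ _

lemma pdist_comm (p : Place k) (u w : K × K) : pdist p u w = pdist p w u := by
  rw [pdist, pdist]
  have : u.1 * w.2 - w.1 * u.2 = -(w.1 * u.2 - u.1 * w.2) := by ring
  rw [this, placeValT_neg]
  congr 1
  congr 1
  ring

/-- `u` is a homogeneous coordinate representative of the point `P`. -/
def IsRep (P : Option K) (u : K × K) : Prop :=
  (P = none ∧ u.2 = 0 ∧ u.1 ≠ 0) ∨ (∃ x, P = some x ∧ u.2 ≠ 0 ∧ u.1 = x * u.2)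

lemma isRep_coords (P : Option K) : IsRep P (coords P) := by
  cases P with
  | none => exact Or.inl ⟨rfl, rfl, one_ne_zero⟩
  | some x => exact Or.inr ⟨x, rfl, one_ne_zero, (mul_one x).symm⟩

lemma isRep_ne {P : Option K} {u : K × K} (h : IsRep P u) : ¬(u.1 = 0 ∧ u.2 = 0) := by
  rcases h with ⟨_, h2, h1⟩ | ⟨x, _, h2, _⟩
  · exact fun hh => h1 hh.1
  · exact fun hh => h2 hh.2

lemma isRep_scale {P : Option K} {u : K × K} (h : IsRep P u) :
    ∃ c : K, c ≠ 0 ∧ u = (c * (coords P).1, c * (coords P).2) := by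
  rcases h with ⟨hP, h2, h1⟩ | ⟨x, hP, h2, h1⟩
  · subst hP
    exact ⟨u.1, h1, by simp [coords, Prod.ext_iff, h2]⟩
  · subst hP
    exact ⟨u.2, h2, by simp [coords, Prod.ext_iff, h1, mul_comm]⟩

lemma pdist_rep_left (p : Place k) {P : Option K} {u : K × K} (h : IsRep P u) (w : K × K) :
    pdist p u w = pdist p (coords P) w := by
  obtain ⟨c, hc, hu⟩ := isRep_scale h
  rw [hu]
  exact pdist_smul_left p hc (isRep_ne (isRep_coords P)) w

lemma logDist_rep (p : Place k) {P Q : Option K} {u w : K × K}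
    (hu : IsRep P u) (hw : IsRep Q w) :
    logDist p P Q = pdist p u w := by
  calc logDist p P Q = pdist p (coords P) (coords Q) := logDist_eq_pdist p P Q
    _ = pdist p (coords Q) (coords P) := pdist_comm p _ _
    _ = pdist p w (coords P) := (pdist_rep_left p hw _).symm
    _ = pdist p (coords P) w := pdist_comm p _ _
    _ = pdist p u w := (pdist_rep_left p hu _).symm

/-- Existence of a `p`-normalized representative. -/
lemma exists_nrep (p : Place k) (P : Option K) :
    ∃ u : K × K, IsRep P u ∧ nmin p u.1 u.2 = 0 ∧
      0 ≤ placeValT p u.1 ∧ 0 ≤ placeValT p u.2 := by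
  obtain ⟨c, hc, hv⟩ := exists_elt_val p (- nmin p (coords P).1 (coords P).2)
  refine ⟨(c * (coords P).1, c * (coords P).2), ?_, ?_, ?_, ?_⟩
  · rcases isRep_coords P with ⟨hP, h2, h1⟩ | ⟨x, hP, h2, h1⟩
    · exact Or.inl ⟨hP, by simp [h2], mul_ne_zero hc h1⟩
    · exact Or.inr ⟨x, hP, mul_ne_zero hc h2, by rw [h1]; ring⟩
  · rw [nmin_smul p hc (isRep_ne (isRep_coords P)), hv]; ring
  all_goals {
    have hn : nmin p (c * (coords P).1) (c * (coords P).2) = 0 := by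
      rw [nmin_smul p hc (isRep_ne (isRep_coords P)), hv]; ring
    first
      | (by_cases h1 : c * (coords P).1 = 0
         · rw [h1, placeValT_zero]; exact le_top
         · rw [placeValT_eq p h1]
           exact_mod_cast hn ▸ nmin_le_left p _ h1)
      | (by_cases h2 : c * (coords P).2 = 0
         · rw [h2, placeValT_zero]; exact le_top
         · rw [placeValT_eq p h2]
           exact_mod_cast hn ▸ nmin_le_right p _ h2) }

lemma pdist_norm (p : Place k) {u w : K × K} (hu : nmin p u.1 u.2 = 0)
    (hw : nmin p w.1 w.2 = 0) :
    pdist p u w = placeValT p (u.1 * w.2 - w.1 * u.2) := by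
  rw [pdist, hu, hw]
  norm_num

end Rep

noncomputable section HEval

open Polynomial
open scoped Classical

variable {k : Type*} [Field k]

local notation "K" => RatFunc k

/-- Evaluation of the degree-`d` homogenization. -/
def hEval (h : Polynomial K) (d : ℕ) (x y : K) : K :=
  ∑ a ∈ Finset.range (d + 1), h.coeff a * x ^ a * y ^ (d - a)

lemma hEval_y_ne {h : Polynomial K} {d : ℕ} (hd : h.natDegree ≤ d) (x : K) {y : K}
    (hy : y ≠ 0) : hEval h d x y = y ^ d * h.eval (x / y) := by
  rw [hEval, Polynomial.eval_eq_sum_range' (Nat.lt_succ_of_le hd), Finset.mul_sum]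
  refine Finset.sum_congr rfl fun a ha => ?_
  rw [Finset.mem_range, Nat.lt_succ_iff] at ha
  rw [div_pow]
  have hyd : y ^ d = y ^ (d - a) * y ^ a := by
    rw [← pow_add]
    congr 1
    omega
  rw [hyd]
  field_simp

lemma hEval_y_zero (h : Polynomial K) (d : ℕ) (x : K) :
    hEval h d x 0 = h.coeff d * x ^ d := by
  rw [hEval, Finset.sum_eq_single d]
  · simp
  · intro a ha hne
    rw [Finset.mem_range, Nat.lt_succ_iff] at ha
    rw [zero_pow (by omega)]
    ring
  · intro h'
    exact absurd (Finset.self_mem_range_succ d) h'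

lemma coeff_d_ne_zero {f g : Polynomial K} (hfg : IsCoprime f g)
    {d : ℕ} (hdeg : max f.natDegree g.natDegree = d) (hg : g.coeff d = 0) :
    f.coeff d ≠ 0 := by
  intro hf
  by_cases hd : d = 0
  · subst hd
    have hf0 : f = 0 := by
      have := Polynomial.eq_C_of_natDegree_le_zero (le_of_eq (by omega : f.natDegree = 0))
      rw [this, hf, map_zero]
    have hg0 : g = 0 := by
      have := Polynomial.eq_C_of_natDegree_le_zero (le_of_eq (by omega : g.natDegree = 0))
      rw [this, hg, map_zero]
    rw [hf0, hg0] at hfg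
    exact not_isCoprime_zero_zero hfg
  · have hd' : 0 < d := Nat.pos_of_ne_zero hd
    rcases max_cases f.natDegree g.natDegree with ⟨h1, _⟩ | ⟨h1, _⟩
    · rw [h1] at hdeg
      have hfne : f ≠ 0 := by
        intro h0
        rw [h0, natDegree_zero] at hdeg
        omega
      have hlc := Polynomial.leadingCoeff_ne_zero.mpr hfne
      rw [Polynomial.leadingCoeff, hdeg] at hlc
      exact hlc hf
    · rw [h1] at hdeg
      have hgne : g ≠ 0 := by
        intro h0
        rw [h0, natDegree_zero] at hdeg
        omega
      have hlc := Polynomial.leadingCoeff_ne_zero.mpr hgne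
      rw [Polynomial.leadingCoeff, hdeg] at hlc
      exact hlc hg

lemma hEval_ne_zero {f g : Polynomial K} (hfg : IsCoprime f g)
    {d : ℕ} (hdeg : max f.natDegree g.natDegree = d) {x y : K} (hxy : ¬(x = 0 ∧ y = 0)) :
    ¬(hEval f d x y = 0 ∧ hEval g d x y = 0) := by
  rintro ⟨hF, hG⟩
  by_cases hy : y = 0
  · subst hy
    have hx : x ≠ 0 := fun hx => hxy ⟨hx, rfl⟩
    rw [hEval_y_zero] at hF hG
    have hg0 : g.coeff d = 0 := by
      rcases mul_eq_zero.mp hG with h | h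
      · exact h
      · exact absurd h (pow_ne_zero d hx)
    have hf0 : f.coeff d = 0 := by
      rcases mul_eq_zero.mp hF with h | h
      · exact h
      · exact absurd h (pow_ne_zero d hx)
    exact coeff_d_ne_zero hfg hdeg hg0 hf0
  · rw [hEval_y_ne (le_trans (le_max_left _ _) (le_of_eq hdeg)) x hy] at hF
    rw [hEval_y_ne (le_trans (le_max_right _ _) (le_of_eq hdeg)) x hy] at hG
    have hf0 : f.eval (x / y) = 0 :=
      (mul_eq_zero.mp hF).resolve_left (pow_ne_zero d hy)
    have hg0 : g.eval (x / y) = 0 :=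
      (mul_eq_zero.mp hG).resolve_left (pow_ne_zero d hy)
    obtain ⟨a, b, hab⟩ := hfg
    have := congrArg (Polynomial.eval (x / y)) hab
    simp [hf0, hg0] at this

lemma logDist_self (p : Place k) (P : Option K) : logDist p P P = ⊤ := by
  rw [logDist_eq_pdist, pdist]
  have : (coords P).1 * (coords P).2 - (coords P).1 * (coords P).2 = 0 := by ring
  rw [this, placeValT_zero, top_add]

lemma nmin_zero_cases (p : Place k) {x y : K} (h : nmin p x y = 0) (hxy : ¬(x = 0 ∧ y = 0)) :
    placeValT p x = 0 ∨ placeValT p y = 0 := by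
  by_cases hx : x = 0
  · have hy : y ≠ 0 := fun hy => hxy ⟨hx, hy⟩
    right
    rw [placeValT_eq p hy]
    rw [nmin, if_pos hx] at h
    exact_mod_cast h
  by_cases hy : y = 0
  · left
    rw [placeValT_eq p hx]
    rw [nmin, if_neg hx, if_pos hy] at h
    exact_mod_cast h
  · rw [nmin, if_neg hx, if_neg hy] at h
    rcases min_cases (placeVal p x) (placeVal p y) with ⟨h1, _⟩ | ⟨h1, _⟩
    · left; rw [placeValT_eq p hx]; exact_mod_cast h1 ▸ h
    · right; rw [placeValT_eq p hy]; exact_mod_cast h1 ▸ h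

lemma nmin_nonneg_components (p : Place k) {x y : K} (h : nmin p x y = 0)
    (hxy : ¬(x = 0 ∧ y = 0)) : 0 ≤ placeValT p x ∧ 0 ≤ placeValT p y := by
  constructor
  · by_cases hx : x = 0
    · rw [hx, placeValT_zero]; exact le_top
    · rw [placeValT_eq p hx]
      exact_mod_cast h ▸ nmin_le_left p y hx
  · by_cases hy : y = 0
    · rw [hy, placeValT_zero]; exact le_top
    · rw [placeValT_eq p hy]
      exact_mod_cast h ▸ nmin_le_right p x hy

/-- The ultrametric-type triangle inequality for the logarithmic distance. -/
lemma logDist_triangle (p : Place k) (P Q R : Option K) :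
    min (logDist p P Q) (logDist p Q R) ≤ logDist p P R := by
  obtain ⟨u, hu, hun, hu1, hu2⟩ := exists_nrep p P
  obtain ⟨v, hv, hvn, hv1, hv2⟩ := exists_nrep p Q
  obtain ⟨w, hw, hwn, hw1, hw2⟩ := exists_nrep p R
  rw [logDist_rep p hu hv, logDist_rep p hv hw, logDist_rep p hu hw,
    pdist_norm p hun hvn, pdist_norm p hvn hwn, pdist_norm p hun hwn]
  rcases nmin_zero_cases p hvn (isRep_ne hv) with hc | hc
  · -- v.1 has valuation zero
    have key : (u.1 * w.2 - w.1 * u.2) * v.1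
        = (u.1 * v.2 - v.1 * u.2) * w.1 + (v.1 * w.2 - w.1 * v.2) * u.1 := by ring
    have h1 : placeValT p ((u.1 * w.2 - w.1 * u.2) * v.1)
        = placeValT p (u.1 * w.2 - w.1 * u.2) := by
      rw [placeValT_mul, hc, add_zero]
    rw [← h1, key]
    refine le_trans ?_ (placeValT_add p _ _)
    apply le_min
    · rw [placeValT_mul]
      refine le_trans ?_ (add_le_add_right hw1 _)
      rw [add_zero]
      exact min_le_left _ _
    · rw [placeValT_mul]
      refine le_trans ?_ (add_le_add_right hu1 _)
      rw [add_zero]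
      exact min_le_right _ _
  · have key : (u.1 * w.2 - w.1 * u.2) * v.2
        = (u.1 * v.2 - v.1 * u.2) * w.2 + (v.1 * w.2 - w.1 * v.2) * u.2 := by ring
    have h1 : placeValT p ((u.1 * w.2 - w.1 * u.2) * v.2)
        = placeValT p (u.1 * w.2 - w.1 * u.2) := by
      rw [placeValT_mul, hc, add_zero]
    rw [← h1, key]
    refine le_trans ?_ (placeValT_add p _ _)
    apply le_min
    · rw [placeValT_mul]
      refine le_trans ?_ (add_le_add_right hw2 _)
      rw [add_zero]
      exact min_le_left _ _
    · rw [placeValT_mul]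
      refine le_trans ?_ (add_le_add_right hu2 _)
      rw [add_zero]
      exact min_le_right _ _

end HEval

noncomputable section Apply

open Polynomial
open scoped Classical

variable {k : Type*} [Field k]

local notation "K" => RatFunc k

lemma eval_f_ne_zero {f g : Polynomial K} (hfg : IsCoprime f g) {t : K}
    (hg : g.eval t = 0) : f.eval t ≠ 0 := by
  intro hf
  obtain ⟨a, b, hab⟩ := hfg
  have := congrArg (Polynomial.eval t) hab
  simp [hf, hg] at this

lemma isRep_apply {f g : Polynomial K} (hfg : IsCoprime f g)
    {d : ℕ} (hdeg : max f.natDegree g.natDegree = d) {P : Option K} {u : K × K}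
    (h : IsRep P u) :
    IsRep (ratApply f g d P) (hEval f d u.1 u.2, hEval g d u.1 u.2) := by
  have hdf : f.natDegree ≤ d := le_trans (le_max_left _ _) (le_of_eq hdeg)
  have hdg : g.natDegree ≤ d := le_trans (le_max_right _ _) (le_of_eq hdeg)
  rcases h with ⟨hP, h2, h1⟩ | ⟨t, hP, h2, h1⟩
  · subst hP
    rw [h2, hEval_y_zero, hEval_y_zero]
    simp only [ratApply]
    by_cases hgd : g.coeff d = 0
    · rw [if_pos hgd]
      exact Or.inl ⟨rfl, by rw [hgd]; ring,
        mul_ne_zero (coeff_d_ne_zero hfg hdeg hgd) (pow_ne_zero d h1)⟩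
    · rw [if_neg hgd]
      refine Or.inr ⟨f.coeff d / g.coeff d, rfl, mul_ne_zero hgd (pow_ne_zero d h1), ?_⟩
      field_simp
  · subst hP
    rw [h1, hEval_y_ne hdf _ h2, hEval_y_ne hdg _ h2,
      mul_div_cancel_right₀ t h2]
    simp only [ratApply]
    by_cases hgt : g.eval t = 0
    · rw [if_pos hgt]
      exact Or.inl ⟨rfl, by rw [hgt]; ring,
        mul_ne_zero (pow_ne_zero d h2) (eval_f_ne_zero hfg hgt)⟩
    · rw [if_neg hgt]
      refine Or.inr ⟨f.eval t / g.eval t, rfl, mul_ne_zero (pow_ne_zero d h2) hgt, ?_⟩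
      field_simp

lemma ratApply_const {f g : Polynomial K} (hdeg : max f.natDegree g.natDegree = 0)
    (P Q : Option K) : ratApply f g 0 P = ratApply f g 0 Q := by
  have hf : f = C (f.coeff 0) :=
    Polynomial.eq_C_of_natDegree_le_zero (le_of_eq (by omega : f.natDegree = 0))
  have hg : g = C (g.coeff 0) :=
    Polynomial.eq_C_of_natDegree_le_zero (le_of_eq (by
      have := le_max_right f.natDegree g.natDegree
      omega : g.natDegree = 0))
  have key : ∀ R : Option K, ratApply f g 0 R =
      if g.coeff 0 = 0 then none else some (f.coeff 0 / g.coeff 0) := by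
    intro R
    cases R with
    | none => simp only [ratApply]
    | some x =>
        simp only [ratApply]
        rw [show g.eval x = g.coeff 0 by rw [hg]; simp,
          show f.eval x = f.coeff 0 by rw [hf]; simp]
  rw [key P, key Q]
end Apply

noncomputable section Resultant

open Polynomial
open scoped Classical

variable {k : Type*} [Field k]

local notation "K" => RatFunc k

/-- The Sylvester matrix underlying `hResultant`. -/
def sylv (d : ℕ) (f g : Polynomial K) : Matrix (Fin (d + d)) (Fin (d + d)) K :=
  Matrix.of fun i j : Fin (d + d) =>
    if (i : ℕ) < d then
      (if (i : ℕ) ≤ (j : ℕ) ∧ (j : ℕ) ≤ (i : ℕ) + d then f.coeff (d + (i : ℕ) - (j : ℕ)) else 0)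
    else
      (if (i : ℕ) - d ≤ (j : ℕ) ∧ (j : ℕ) ≤ (i : ℕ) then g.coeff ((i : ℕ) - (j : ℕ)) else 0)

lemma hResultant_eq (d : ℕ) (f g : Polynomial K) :
    hResultant d f g = (sylv d f g).det := rfl

lemma vT_det_nonneg (p : Place k) {m : ℕ} (M : Matrix (Fin m) (Fin m) K)
    (h : ∀ i j, 0 ≤ placeValT p (M i j)) : 0 ≤ placeValT p M.det := by
  rw [Matrix.det_apply]
  apply le_placeValT_sum
  intro σ _
  have hprod : 0 ≤ placeValT p (∏ i, M (σ i) i) := by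
    refine Finset.prod_induction _ (fun z => 0 ≤ placeValT p z) ?_ ?_ ?_
    · intro a b ha hb
      rw [placeValT_mul]
      exact add_nonneg ha hb
    · show (0 : WithTop ℤ) ≤ placeValT p (1 : K)
      rw [placeValT_one]
    · intro i _
      exact h _ _
  rcases Int.units_eq_one_or (Equiv.Perm.sign σ) with hs | hs
  · rw [hs, one_smul]; exact hprod
  · rw [hs]
    have : ((-1 : ℤˣ) : ℤ) • (∏ i, M (σ i) i) = -(∏ i, M (σ i) i) := by
      simp
    rw [Units.smul_def] at *
    simp only [hs] at *
    rw [this, placeValT_neg]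
    exact hprod

lemma vT_sylv_nonneg (p : Place k) {f g : Polynomial K} {d : ℕ}
    (hcf : ∀ n, 0 ≤ placeValT p (f.coeff n)) (hcg : ∀ n, 0 ≤ placeValT p (g.coeff n)) :
    ∀ i j, 0 ≤ placeValT p (sylv d f g i j) := by
  intro i j
  rw [sylv, Matrix.of_apply]
  split_ifs
  · exact hcf _
  · rw [placeValT_zero]; exact le_top
  · exact hcg _
  · rw [placeValT_zero]; exact le_top

lemma vT_adjugate_nonneg (p : Place k) {m : ℕ} (M : Matrix (Fin m) (Fin m) K)
    (h : ∀ i j, 0 ≤ placeValT p (M i j)) (i j : Fin m) :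
    0 ≤ placeValT p (M.adjugate i j) := by
  rw [Matrix.adjugate_apply]
  apply vT_det_nonneg
  intro a b
  rw [Matrix.updateRow_apply]
  split_ifs with hab
  · rw [Pi.single_apply]
    split_ifs
    · show (0 : WithTop ℤ) ≤ placeValT p (1 : K)
      rw [placeValT_one]
    · rw [placeValT_zero]; exact le_top
  · exact h a b

lemma sylv_row_lt {f g : Polynomial K} {d : ℕ} {i : Fin (d + d)} (hi : (i : ℕ) < d)
    (x y : K) :
    ∑ j : Fin (d + d), sylv d f g i j * (x ^ (d + d - 1 - (j : ℕ)) * y ^ (j : ℕ))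
      = x ^ (d - 1 - (i : ℕ)) * y ^ (i : ℕ) * hEval f d x y := by
  have hrew : ∑ j : Fin (d + d), sylv d f g i j * (x ^ (d + d - 1 - (j : ℕ)) * y ^ (j : ℕ))
      = ∑ jn ∈ Finset.range (d + d),
          (if (i : ℕ) ≤ jn ∧ jn ≤ (i : ℕ) + d then f.coeff (d + (i : ℕ) - jn) else 0)
            * (x ^ (d + d - 1 - jn) * y ^ jn) := by
    rw [← Fin.sum_univ_eq_sum_range (fun jn =>
      (if (i : ℕ) ≤ jn ∧ jn ≤ (i : ℕ) + d then f.coeff (d + (i : ℕ) - jn) else 0)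
        * (x ^ (d + d - 1 - jn) * y ^ jn)) (d + d)]
    refine Finset.sum_congr rfl fun j _ => ?_
    simp only [sylv, Matrix.of_apply, hi, if_true]
  rw [hrew]
  have step1 : ∀ jn ∈ Finset.range (d + d),
      (if (i : ℕ) ≤ jn ∧ jn ≤ (i : ℕ) + d then f.coeff (d + (i : ℕ) - jn) else 0)
          * (x ^ (d + d - 1 - jn) * y ^ jn)
        = if jn ∈ Finset.Ico (i : ℕ) ((i : ℕ) + d + 1) then
            f.coeff (d + (i : ℕ) - jn) * (x ^ (d + d - 1 - jn) * y ^ jn) else 0 := by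
    intro jn _
    by_cases h : (i : ℕ) ≤ jn ∧ jn ≤ (i : ℕ) + d
    · rw [if_pos h, if_pos (Finset.mem_Ico.mpr ⟨h.1, by omega⟩)]
    · rw [if_neg h, if_neg (fun hc => h (by
        rcases Finset.mem_Ico.mp hc with ⟨h1, h2⟩
        exact ⟨h1, by omega⟩)), zero_mul]
  rw [Finset.sum_congr rfl step1, Finset.sum_ite_mem,
    Finset.inter_eq_right.mpr (by
      intro jn hjn
      rcases Finset.mem_Ico.mp hjn with ⟨h1, h2⟩
      exact Finset.mem_range.mpr (by omega)),
    Finset.sum_Ico_eq_sum_range]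
  have hdd : (i : ℕ) + d + 1 - (i : ℕ) = d + 1 := by omega
  rw [hdd, hEval, Finset.mul_sum, ← Finset.sum_range_reflect]
  refine Finset.sum_congr rfl fun m hm => ?_
  rw [Finset.mem_range] at hm
  have e0 : d + (i : ℕ) - ((i : ℕ) + (d + 1 - 1 - m)) = m := by omega
  have e1 : x ^ (d + d - 1 - ((i : ℕ) + (d + 1 - 1 - m))) = x ^ m * x ^ (d - 1 - (i : ℕ)) := by
    rw [← pow_add]; congr 1; omega
  have e2 : y ^ ((i : ℕ) + (d + 1 - 1 - m)) = y ^ (d - m) * y ^ (i : ℕ) := by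
    rw [← pow_add]; congr 1; omega
  rw [e0, e1, e2]
  ring

lemma sylv_row_ge {f g : Polynomial K} {d : ℕ} {i : Fin (d + d)} (hi : d ≤ (i : ℕ))
    (x y : K) :
    ∑ j : Fin (d + d), sylv d f g i j * (x ^ (d + d - 1 - (j : ℕ)) * y ^ (j : ℕ))
      = x ^ (d + d - 1 - (i : ℕ)) * y ^ ((i : ℕ) - d) * hEval g d x y := by
  have hi' : ¬ ((i : ℕ) < d) := by omega
  have hrew : ∑ j : Fin (d + d), sylv d f g i j * (x ^ (d + d - 1 - (j : ℕ)) * y ^ (j : ℕ))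
      = ∑ jn ∈ Finset.range (d + d),
          (if (i : ℕ) - d ≤ jn ∧ jn ≤ (i : ℕ) then g.coeff ((i : ℕ) - jn) else 0)
            * (x ^ (d + d - 1 - jn) * y ^ jn) := by
    rw [← Fin.sum_univ_eq_sum_range (fun jn =>
      (if (i : ℕ) - d ≤ jn ∧ jn ≤ (i : ℕ) then g.coeff ((i : ℕ) - jn) else 0)
        * (x ^ (d + d - 1 - jn) * y ^ jn)) (d + d)]
    refine Finset.sum_congr rfl fun j _ => ?_
    simp only [sylv, Matrix.of_apply, hi', if_false]
  rw [hrew]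
  have step1 : ∀ jn ∈ Finset.range (d + d),
      (if (i : ℕ) - d ≤ jn ∧ jn ≤ (i : ℕ) then g.coeff ((i : ℕ) - jn) else 0)
          * (x ^ (d + d - 1 - jn) * y ^ jn)
        = if jn ∈ Finset.Ico ((i : ℕ) - d) ((i : ℕ) + 1) then
            g.coeff ((i : ℕ) - jn) * (x ^ (d + d - 1 - jn) * y ^ jn) else 0 := by
    intro jn _
    by_cases h : (i : ℕ) - d ≤ jn ∧ jn ≤ (i : ℕ)
    · rw [if_pos h, if_pos (Finset.mem_Ico.mpr ⟨h.1, by omega⟩)]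
    · rw [if_neg h, if_neg (fun hc => h (by
        rcases Finset.mem_Ico.mp hc with ⟨h1, h2⟩
        exact ⟨h1, by omega⟩)), zero_mul]
  have hiN : (i : ℕ) < d + d := i.isLt
  rw [Finset.sum_congr rfl step1, Finset.sum_ite_mem,
    Finset.inter_eq_right.mpr (by
      intro jn hjn
      rcases Finset.mem_Ico.mp hjn with ⟨h1, h2⟩
      exact Finset.mem_range.mpr (by omega)),
    Finset.sum_Ico_eq_sum_range]
  have hdd : (i : ℕ) + 1 - ((i : ℕ) - d) = d + 1 := by omega
  rw [hdd, hEval, Finset.mul_sum, ← Finset.sum_range_reflect]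
  refine Finset.sum_congr rfl fun m hm => ?_
  rw [Finset.mem_range] at hm
  have e0 : (i : ℕ) - ((i : ℕ) - d + (d + 1 - 1 - m)) = m := by omega
  have e1 : x ^ (d + d - 1 - ((i : ℕ) - d + (d + 1 - 1 - m)))
      = x ^ m * x ^ (d + d - 1 - (i : ℕ)) := by
    rw [← pow_add]; congr 1; omega
  have e2 : y ^ ((i : ℕ) - d + (d + 1 - 1 - m)) = y ^ (d - m) * y ^ ((i : ℕ) - d) := by
    rw [← pow_add]; congr 1; omega
  rw [e0, e1, e2]
  ring

lemma hEval_vT_nonneg (p : Place k) {f : Polynomial K} (d : ℕ)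
    (hcf : ∀ n, 0 ≤ placeValT p (f.coeff n)) {x y : K}
    (hx : 0 ≤ placeValT p x) (hy : 0 ≤ placeValT p y) :
    0 ≤ placeValT p (hEval f d x y) := by
  apply le_placeValT_sum
  intro a _
  rw [placeValT_mul, placeValT_mul]
  exact add_nonneg (add_nonneg (hcf a) (placeValT_pow_nonneg p hx a))
    (placeValT_pow_nonneg p hy (d - a))

end Resultant

noncomputable section Key

open Polynomial
open scoped Classical

variable {k : Type*} [Field k]

local notation "K" => RatFunc k

/-- Key lemma 1: for a map with good reduction at `p`, the homogenization evaluated at a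
`p`-normalized pair is again `p`-normalized. -/
lemma hEval_nmin_zero (p : Place k) {f g : Polynomial K} {d : ℕ} (hd : 0 < d)
    (hfg : IsCoprime f g) (hdeg : max f.natDegree g.natDegree = d)
    (hcf : ∀ n, 0 ≤ placeValT p (f.coeff n)) (hcg : ∀ n, 0 ≤ placeValT p (g.coeff n))
    (hres : placeValT p (hResultant d f g) = 0)
    {x y : K} (hxy : ¬(x = 0 ∧ y = 0)) (hx : 0 ≤ placeValT p x) (hy : 0 ≤ placeValT p y)
    (hn : nmin p x y = 0) :
    nmin p (hEval f d x y) (hEval g d x y) = 0 := by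
  have hF0 : 0 ≤ placeValT p (hEval f d x y) := hEval_vT_nonneg p d hcf hx hy
  have hG0 : 0 ≤ placeValT p (hEval g d x y) := hEval_vT_nonneg p d hcg hx hy
  -- not both strictly positive
  have hnotboth : ¬(0 < placeValT p (hEval f d x y) ∧ 0 < placeValT p (hEval g d x y)) := by
    rintro ⟨hF, hG⟩
    set ε := min (placeValT p (hEval f d x y)) (placeValT p (hEval g d x y)) with hε
    have hεpos : 0 < ε := lt_min hF hG
    set M := sylv d f g with hM
    set w : Fin (d + d) → K := fun l => x ^ (d + d - 1 - (l : ℕ)) * y ^ (l : ℕ) with hw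
    have hu : ∀ i, ε ≤ placeValT p (M.mulVec w i) := by
      intro i
      have : M.mulVec w i = ∑ j : Fin (d + d), M i j * w j := by
        simp [Matrix.mulVec, dotProduct]
      rw [this]
      by_cases hi : (i : ℕ) < d
      · rw [sylv_row_lt hi x y, placeValT_mul, placeValT_mul]
        calc ε ≤ placeValT p (hEval f d x y) := min_le_left _ _
          _ ≤ (placeValT p (x ^ (d - 1 - (i:ℕ))) + placeValT p (y ^ (i:ℕ)))
              + placeValT p (hEval f d x y) := by
            refine le_add_of_nonneg_left ?_
            exact add_nonneg (placeValT_pow_nonneg p hx _) (placeValT_pow_nonneg p hy _)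
      · rw [sylv_row_ge (by omega) x y, placeValT_mul, placeValT_mul]
        calc ε ≤ placeValT p (hEval g d x y) := min_le_right _ _
          _ ≤ (placeValT p (x ^ (d + d - 1 - (i:ℕ))) + placeValT p (y ^ ((i:ℕ) - d)))
              + placeValT p (hEval g d x y) := by
            refine le_add_of_nonneg_left ?_
            exact add_nonneg (placeValT_pow_nonneg p hx _) (placeValT_pow_nonneg p hy _)
    have hsylv := vT_sylv_nonneg p hcf hcg (d := d)
    have hadj : ∀ l j, 0 ≤ placeValT p (M.adjugate l j) :=
      fun l j => vT_adjugate_nonneg p M hsylv l j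
    have hdet : ∀ l, (M.adjugate).mulVec (M.mulVec w) l = M.det * w l := by
      intro l
      rw [Matrix.mulVec_mulVec, Matrix.adjugate_mul, Matrix.smul_mulVec,
        Matrix.one_mulVec]
      rfl
    -- choose an index with unit coordinate
    obtain ⟨l, hl⟩ : ∃ l : Fin (d + d), placeValT p (w l) = 0 := by
      rcases nmin_zero_cases p hn hxy with hvx | hvy
      · refine ⟨⟨0, by omega⟩, ?_⟩
        show placeValT p (x ^ (d + d - 1 - 0) * y ^ 0) = 0
        rw [pow_zero, mul_one, placeValT_pow, hvx, smul_zero]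
      · refine ⟨⟨d + d - 1, by omega⟩, ?_⟩
        show placeValT p (x ^ (d + d - 1 - (d + d - 1)) * y ^ (d + d - 1)) = 0
        rw [Nat.sub_self, pow_zero, one_mul, placeValT_pow, hvy, smul_zero]
    have h1 : placeValT p (M.det * w l) ≤ 0 := by
      rw [placeValT_mul, hl, add_zero, ← hResultant_eq, hres]
    have h2 : ε ≤ placeValT p (M.det * w l) := by
      rw [← hdet l]
      have : (M.adjugate).mulVec (M.mulVec w) l
          = ∑ j : Fin (d + d), M.adjugate l j * M.mulVec w j := by
        simp [Matrix.mulVec, dotProduct]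
      rw [this]
      apply le_placeValT_sum
      intro j _
      rw [placeValT_mul]
      calc ε ≤ placeValT p (M.mulVec w j) := hu j
        _ ≤ placeValT p (M.adjugate l j) + placeValT p (M.mulVec w j) :=
          le_add_of_nonneg_left (hadj l j)
    exact absurd (lt_of_lt_of_le hεpos h2) (not_lt.mpr h1)
  -- now conclude
  have hne := hEval_ne_zero hfg hdeg hxy
  by_cases hFz : hEval f d x y = 0
  · have hGz : hEval g d x y ≠ 0 := fun h => hne ⟨hFz, h⟩
    have hGv : placeValT p (hEval g d x y) = 0 := by
      rcases lt_or_eq_of_le hG0 with h | h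
      · exact absurd ⟨by rw [hFz, placeValT_zero]; exact WithTop.top_pos , h⟩ hnotboth
      · exact h.symm
    rw [nmin, if_pos hFz]
    rw [placeValT_eq p hGz] at hGv
    exact_mod_cast hGv
  by_cases hGz : hEval g d x y = 0
  · have hFv : placeValT p (hEval f d x y) = 0 := by
      rcases lt_or_eq_of_le hF0 with h | h
      · exact absurd ⟨h, by rw [hGz, placeValT_zero]; exact WithTop.top_pos⟩ hnotboth
      · exact h.symm
    rw [nmin, if_neg hFz, if_pos hGz]
    rw [placeValT_eq p hFz] at hFv
    exact_mod_cast hFv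
  · rw [nmin, if_neg hFz, if_neg hGz]
    rw [placeValT_eq p hFz] at hF0 hnotboth
    rw [placeValT_eq p hGz] at hG0 hnotboth
    have hF0' : 0 ≤ placeVal p (hEval f d x y) := by exact_mod_cast hF0
    have hG0' : 0 ≤ placeVal p (hEval g d x y) := by exact_mod_cast hG0
    have : ¬(0 < placeVal p (hEval f d x y) ∧ 0 < placeVal p (hEval g d x y)) := by
      intro ⟨h1, h2⟩
      exact hnotboth ⟨by exact_mod_cast h1, by exact_mod_cast h2⟩
    omega

end Key

noncomputable section Key2

open Polynomial
open scoped Classical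

variable {k : Type*} [Field k]

local notation "K" => RatFunc k

lemma geom_factor (p : Place k) {X Y : K} (hX : 0 ≤ placeValT p X) (hY : 0 ≤ placeValT p Y)
    (m : ℕ) : ∃ H : K, X ^ m - Y ^ m = (X - Y) * H ∧ 0 ≤ placeValT p H := by
  refine ⟨∑ i ∈ Finset.range m, X ^ i * Y ^ (m - 1 - i), ?_, ?_⟩
  · rw [mul_comm]
    exact (geom_sum₂_mul X Y m).symm
  · apply le_placeValT_sum
    intro i _
    rw [placeValT_mul]
    exact add_nonneg (placeValT_pow_nonneg p hX i) (placeValT_pow_nonneg p hY _)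

lemma term_factor_le (p : Place k) {x1 y1 x2 y2 : K} (h1 : 0 ≤ placeValT p x1)
    (h2 : 0 ≤ placeValT p y1) (h3 : 0 ≤ placeValT p x2) (h4 : 0 ≤ placeValT p y2)
    {d a b : ℕ} (ha : a ≤ d) (hb : b ≤ d) (hab : a ≤ b) :
    ∃ H : K, x1 ^ a * y1 ^ (d - a) * (x2 ^ b * y2 ^ (d - b))
        - x1 ^ b * y1 ^ (d - b) * (x2 ^ a * y2 ^ (d - a))
      = (x1 * y2 - x2 * y1) * H ∧ 0 ≤ placeValT p H := by
  obtain ⟨H0, hid, hH0⟩ := geom_factor p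
    (show 0 ≤ placeValT p (y1 * x2) by rw [placeValT_mul]; exact add_nonneg h2 h3)
    (show 0 ≤ placeValT p (x1 * y2) by rw [placeValT_mul]; exact add_nonneg h1 h4)
    (b - a)
  set C : K := x1 ^ a * x2 ^ a * (y1 ^ (d - b) * y2 ^ (d - b)) with hC
  refine ⟨-(C * H0), ?_, ?_⟩
  · have e1 : y1 ^ (d - a) = y1 ^ (d - b) * y1 ^ (b - a) := by
      rw [← pow_add]; congr 1; omega
    have e2 : x2 ^ b = x2 ^ a * x2 ^ (b - a) := by
      rw [← pow_add]; congr 1; omega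
    have e3 : y2 ^ (d - a) = y2 ^ (d - b) * y2 ^ (b - a) := by
      rw [← pow_add]; congr 1; omega
    have e4 : x1 ^ b = x1 ^ a * x1 ^ (b - a) := by
      rw [← pow_add]; congr 1; omega
    have key : x1 ^ a * y1 ^ (d - a) * (x2 ^ b * y2 ^ (d - b))
        - x1 ^ b * y1 ^ (d - b) * (x2 ^ a * y2 ^ (d - a))
        = C * ((y1 * x2) ^ (b - a) - (x1 * y2) ^ (b - a)) := by
      rw [e1, e2, e3, e4, mul_pow, mul_pow, hC]
      ring
    rw [key, hid]
    ring
  · rw [placeValT_neg, placeValT_mul]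
    refine add_nonneg ?_ hH0
    rw [hC, placeValT_mul, placeValT_mul, placeValT_mul]
    exact add_nonneg (add_nonneg (placeValT_pow_nonneg p h1 a) (placeValT_pow_nonneg p h3 a))
      (add_nonneg (placeValT_pow_nonneg p h2 _) (placeValT_pow_nonneg p h4 _))

lemma term_factor (p : Place k) {x1 y1 x2 y2 : K} (h1 : 0 ≤ placeValT p x1)
    (h2 : 0 ≤ placeValT p y1) (h3 : 0 ≤ placeValT p x2) (h4 : 0 ≤ placeValT p y2)
    {d a b : ℕ} (ha : a ≤ d) (hb : b ≤ d) :
    ∃ H : K, x1 ^ a * y1 ^ (d - a) * (x2 ^ b * y2 ^ (d - b))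
        - x1 ^ b * y1 ^ (d - b) * (x2 ^ a * y2 ^ (d - a))
      = (x1 * y2 - x2 * y1) * H ∧ 0 ≤ placeValT p H := by
  rcases le_total a b with hab | hab
  · exact term_factor_le p h1 h2 h3 h4 ha hb hab
  · obtain ⟨H, hid, hH⟩ := term_factor_le p h1 h2 h3 h4 hb ha hab
    refine ⟨-H, ?_, by rwa [placeValT_neg]⟩
    rw [mul_neg, ← hid]
    ring

/-- Key lemma 2: the cross term of homogenized images is divisible by the original cross
term, with integral quotient. -/
lemma cross_bound (p : Place k) {f g : Polynomial K} (d : ℕ)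
    (hcf : ∀ n, 0 ≤ placeValT p (f.coeff n)) (hcg : ∀ n, 0 ≤ placeValT p (g.coeff n))
    {x1 y1 x2 y2 : K} (h1 : 0 ≤ placeValT p x1) (h2 : 0 ≤ placeValT p y1)
    (h3 : 0 ≤ placeValT p x2) (h4 : 0 ≤ placeValT p y2) :
    placeValT p (x1 * y2 - x2 * y1)
      ≤ placeValT p (hEval f d x1 y1 * hEval g d x2 y2
          - hEval f d x2 y2 * hEval g d x1 y1) := by
  classical
  have hterm : ∀ a ∈ Finset.range (d + 1), ∀ b ∈ Finset.range (d + 1),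
      ∃ H : K, x1 ^ a * y1 ^ (d - a) * (x2 ^ b * y2 ^ (d - b))
          - x1 ^ b * y1 ^ (d - b) * (x2 ^ a * y2 ^ (d - a))
        = (x1 * y2 - x2 * y1) * H ∧ 0 ≤ placeValT p H := by
    intro a hA b hB
    rw [Finset.mem_range] at hA hB
    exact term_factor p h1 h2 h3 h4 (by omega) (by omega)
  choose HH hHid hHpos using hterm
  have expand : hEval f d x1 y1 * hEval g d x2 y2 - hEval f d x2 y2 * hEval g d x1 y1
      = (x1 * y2 - x2 * y1) * ∑ a ∈ Finset.range (d + 1), ∑ b ∈ Finset.range (d + 1),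
          f.coeff a * g.coeff b *
            (if ha : a ∈ Finset.range (d + 1) then
              (if hb : b ∈ Finset.range (d + 1) then HH a ha b hb else 0) else 0) := by
    rw [hEval, hEval, hEval, hEval, Finset.sum_mul_sum, Finset.sum_mul_sum,
      ← Finset.sum_sub_distrib, Finset.mul_sum]
    refine Finset.sum_congr rfl fun a hA => ?_
    rw [← Finset.sum_sub_distrib, Finset.mul_sum]
    refine Finset.sum_congr rfl fun b hB => ?_
    rw [dif_pos hA, dif_pos hB]
    have := hHid a hA b hB
    calc f.coeff a * x1 ^ a * y1 ^ (d - a) * (g.coeff b * x2 ^ b * y2 ^ (d - b))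
          - f.coeff a * x2 ^ a * y2 ^ (d - a) * (g.coeff b * x1 ^ b * y1 ^ (d - b))
        = f.coeff a * g.coeff b *
            (x1 ^ a * y1 ^ (d - a) * (x2 ^ b * y2 ^ (d - b))
              - x1 ^ b * y1 ^ (d - b) * (x2 ^ a * y2 ^ (d - a))) := by ring
      _ = f.coeff a * g.coeff b * ((x1 * y2 - x2 * y1) * HH a hA b hB) := by rw [this]
      _ = (x1 * y2 - x2 * y1) * (f.coeff a * g.coeff b * HH a hA b hB) := by ring
  rw [expand, placeValT_mul]
  refine le_add_of_nonneg_right ?_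
  apply le_placeValT_sum
  intro a hA
  apply le_placeValT_sum
  intro b hB
  rw [dif_pos hA, dif_pos hB, placeValT_mul, placeValT_mul]
  exact add_nonneg (add_nonneg (hcf a) (hcg b)) (hHpos a hA b hB)

/-- Good reduction at `p` implies the logarithmic distance does not decrease under `φ`. -/
lemma logDist_le_apply (p : Place k) {f g : Polynomial K} {d : ℕ}
    (hfg : IsCoprime f g) (hdeg : max f.natDegree g.natDegree = d)
    (hcf : ∀ n, 0 ≤ placeValT p (f.coeff n)) (hcg : ∀ n, 0 ≤ placeValT p (g.coeff n))
    (hres : placeValT p (hResultant d f g) = 0) (P Q : Option K) :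
    logDist p P Q ≤ logDist p (ratApply f g d P) (ratApply f g d Q) := by
  rcases Nat.eq_zero_or_pos d with hd | hd
  · subst hd
    rw [ratApply_const hdeg P Q, logDist_self]
    exact le_top
  obtain ⟨u, hu, hun, hu1, hu2⟩ := exists_nrep p P
  obtain ⟨v, hv, hvn, hv1, hv2⟩ := exists_nrep p Q
  have hU := isRep_apply hfg hdeg hu
  have hV := isRep_apply hfg hdeg hv
  have hUn : nmin p (hEval f d u.1 u.2) (hEval g d u.1 u.2) = 0 :=
    hEval_nmin_zero p hd hfg hdeg hcf hcg hres (isRep_ne hu) hu1 hu2 hun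
  have hVn : nmin p (hEval f d v.1 v.2) (hEval g d v.1 v.2) = 0 :=
    hEval_nmin_zero p hd hfg hdeg hcf hcg hres (isRep_ne hv) hv1 hv2 hvn
  rw [logDist_rep p hu hv, logDist_rep p hU hV, pdist_norm p hun hvn,
    pdist_norm p hUn hVn]
  exact cross_bound p d hcf hcg hu1 hu2 hv1 hv2

end Key2

noncomputable section Cycle

open Polynomial
open scoped Classical

variable {k : Type*} [Field k]

local notation "K" => RatFunc k

lemma logDist_comm (p : Place k) (P Q : Option K) : logDist p P Q = logDist p Q P := by
  rw [logDist_eq_pdist, logDist_eq_pdist, pdist_comm]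

lemma ratApply_C_mul {c : K} (hc : c ≠ 0) (f g : Polynomial K) (d : ℕ) :
    ratApply (Polynomial.C c * f) (Polynomial.C c * g) d = ratApply f g d := by
  funext P
  cases P with
  | none =>
      simp only [ratApply, coeff_C_mul]
      by_cases hgd : g.coeff d = 0
      · rw [if_pos (by rw [hgd, mul_zero]), if_pos hgd]
      · rw [if_neg (mul_ne_zero hc hgd), if_neg hgd, mul_div_mul_left _ _ hc]
  | some x =>
      simp only [ratApply, eval_mul, eval_C]
      by_cases hgx : g.eval x = 0
      · rw [if_pos (by rw [hgx, mul_zero]), if_pos hgx]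
      · rw [if_neg (mul_ne_zero hc hgx), if_neg hgx, mul_div_mul_left _ _ hc]

end Cycle

theorem logDist_periodic_coprime {k : Type*} [Field k] [IsAlgClosed k] [CharZero k]
    (S : Finset (Place k)) (s : ℕ) (hS : S.Nonempty) (hcard : S.card = s)
    (d : ℕ) (f g : Polynomial (RatFunc k)) (hfg : IsCoprime f g)
    (hdeg : max f.natDegree g.natDegree = d)
    (hgood : HasSimpleGoodReductionOutside S f g d)
    (P : Option (RatFunc k)) (n : ℕ) (hn : 0 < n)
    (hper : (ratApply f g d)^[n] P = P)
    (hmin : ∀ e, 0 < e → e < n → (ratApply f g d)^[e] P ≠ P)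
    (i j : ℕ) (hij : Int.gcd ((i : ℤ) - (j : ℤ)) (n : ℤ) = 1) :
    ∀ p ∉ S,
      logDist p ((ratApply f g d)^[i] P) ((ratApply f g d)^[j] P) =
        logDist p (ratApply f g d P) P := by
  intro p hp
  classical
  obtain ⟨c, hc, ⟨hcf', hcg', -⟩, hres⟩ := hgood
  set φ := ratApply f g d with hφ
  have hfg' : IsCoprime (Polynomial.C c * f) (Polynomial.C c * g) := by
    obtain ⟨a, b, hab⟩ := hfg
    have hCc : (Polynomial.C c⁻¹ : Polynomial (RatFunc k)) * Polynomial.C c = 1 := by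
      rw [← Polynomial.C_mul, inv_mul_cancel₀ hc, Polynomial.C_1]
    exact ⟨Polynomial.C c⁻¹ * a, Polynomial.C c⁻¹ * b, by
      rw [show (Polynomial.C c⁻¹ * a) * (Polynomial.C c * f)
          + (Polynomial.C c⁻¹ * b) * (Polynomial.C c * g)
          = (Polynomial.C c⁻¹ * Polynomial.C c) * (a * f + b * g) by ring, hCc, hab, mul_one]⟩
  have hdeg' : max (Polynomial.C c * f).natDegree (Polynomial.C c * g).natDegree = d := by
    rw [Polynomial.natDegree_C_mul hc, Polynomial.natDegree_C_mul hc]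
    exact hdeg
  have hcf : ∀ m, 0 ≤ placeValT p ((Polynomial.C c * f).coeff m) := fun m => hcf' m p hp
  have hcg : ∀ m, 0 ≤ placeValT p ((Polynomial.C c * g).coeff m) := fun m => hcg' m p hp
  have hres0 : placeValT p (hResultant d (Polynomial.C c * f) (Polynomial.C c * g)) = 0 :=
    hres p hp
  have mono : ∀ A B : Option (RatFunc k), logDist p A B ≤ logDist p (φ A) (φ B) := by
    intro A B
    rw [hφ, ← ratApply_C_mul hc f g d]
    exact logDist_le_apply p hfg' hdeg' hcf hcg hres0 A B
  -- notation for distances along the orbit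
  have step : ∀ a b : ℕ, logDist p (φ^[a] P) (φ^[b] P)
      ≤ logDist p (φ^[a+1] P) (φ^[b+1] P) := by
    intro a b
    rw [Function.iterate_succ_apply', Function.iterate_succ_apply']
    exact mono _ _
  have iterm : ∀ (m a b : ℕ), logDist p (φ^[a] P) (φ^[b] P)
      ≤ logDist p (φ^[a+m] P) (φ^[b+m] P) := by
    intro m
    induction m with
    | zero => intro a b; simp
    | succ m ih =>
        intro a b
        refine le_trans (ih a b) ?_
        have e1 : a + (m+1) = (a + m) + 1 := by omega
        have e2 : b + (m+1) = (b + m) + 1 := by omega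
        rw [e1, e2]
        exact step (a+m) (b+m)
  have per : ∀ a : ℕ, φ^[a + n] P = φ^[a] P := by
    intro a
    rw [Function.iterate_add_apply, hper]
  have shift : ∀ a b : ℕ, logDist p (φ^[a] P) (φ^[b] P)
      = logDist p (φ^[a+1] P) (φ^[b+1] P) := by
    intro a b
    refine le_antisymm (step a b) ?_
    have h := iterm (n-1) (a+1) (b+1)
    have e1 : a + 1 + (n-1) = a + n := by omega
    have e2 : b + 1 + (n-1) = b + n := by omega
    rw [e1, e2, per a, per b] at h
    exact h
  have shiftm : ∀ (m a b : ℕ), logDist p (φ^[a] P) (φ^[b] P)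
      = logDist p (φ^[a+m] P) (φ^[b+m] P) := by
    intro m
    induction m with
    | zero => intro a b; simp
    | succ m ih =>
        intro a b
        rw [ih a b, shift (a+m) (b+m)]
        congr 2 <;> omega
  have DE : ∀ (m b : ℕ), logDist p (φ^[m+b] P) (φ^[b] P) = logDist p (φ^[m] P) (φ^[0] P) := by
    intro m b
    have := shiftm b m 0
    rw [this]
    congr 2
    omega
  have Eper : ∀ m : ℕ, logDist p (φ^[m+n] P) (φ^[0] P) = logDist p (φ^[m] P) (φ^[0] P) := by
    intro m
    rw [per m]
  have Emod : ∀ m : ℕ, logDist p (φ^[m] P) (φ^[0] P) = logDist p (φ^[m % n] P) (φ^[0] P) := by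
    intro m
    induction m using Nat.strong_induction_on with
    | _ m ih =>
        by_cases hm : m < n
        · rw [Nat.mod_eq_of_lt hm]
        · have e : m = (m - n) + n := by omega
          rw [Nat.mod_eq_sub_mod (show n ≤ m by omega), ← ih (m - n) (by omega),
            ← Eper (m - n), ← e]
  have chain : ∀ (u m : ℕ), logDist p (φ^[m] P) (φ^[0] P) ≤ logDist p (φ^[u*m] P) (φ^[0] P) := by
    intro u m
    induction u with
    | zero =>
        have : (0 * m) = 0 := by omega
        rw [this]
        simp only [Function.iterate_zero_apply]
        rw [show logDist p P P = ⊤ from logDist_self p P]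
        exact le_top
    | succ u ih =>
        have tri := logDist_triangle p (φ^[(u+1)*m] P) (φ^[u*m] P) (φ^[0] P)
        have e : (u+1)*m = m + u*m := by ring
        have hDE : logDist p (φ^[(u+1)*m] P) (φ^[u*m] P) = logDist p (φ^[m] P) (φ^[0] P) := by
          rw [e]
          exact DE m (u*m)
        rw [hDE] at tri
        exact le_trans (le_min (le_refl _) ih) tri
  have Ecop : ∀ m : ℕ, Nat.gcd m n = 1 →
      logDist p (φ^[m] P) (φ^[0] P) = logDist p (φ^[1] P) (φ^[0] P) := by
    intro m hg
    by_cases hn1 : n = 1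
    · subst hn1
      rw [Emod m, Emod 1]
      simp [Nat.mod_one]
    · have hn2 : 1 < n := by omega
      refine le_antisymm ?_ ?_
      · obtain ⟨u, -, hu⟩ := Nat.exists_mul_mod_eq_one_of_coprime hg hn2
        have h1 : logDist p (φ^[m] P) (φ^[0] P) ≤ logDist p (φ^[u*m] P) (φ^[0] P) :=
          chain u m
        have h2 : logDist p (φ^[u*m] P) (φ^[0] P) = logDist p (φ^[1] P) (φ^[0] P) := by
          rw [Emod (u*m), show u * m % n = 1 by rw [mul_comm]; exact hu]
        rw [← h2]
        exact h1
      · have h1 := chain m 1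
        rw [mul_one] at h1
        exact h1
  have goalr : logDist p (φ P) P = logDist p (φ^[1] P) (φ^[0] P) := by
    simp
  rw [goalr]
  rcases le_total j i with hji | hij'
  · have hgcd : Nat.gcd (i - j) n = 1 := by
      have e : ((i - j : ℕ) : ℤ) = (i : ℤ) - (j : ℤ) := by omega
      rw [← e, Int.gcd_natCast_natCast] at hij
      exact hij
    have h1 := DE (i - j) j
    rw [← (show i = (i - j) + j by omega)] at h1
    rw [h1]
    exact Ecop (i-j) hgcd
  · have hgcd : Nat.gcd (j - i) n = 1 := by
      have e : ((j - i : ℕ) : ℤ) = -((i : ℤ) - (j : ℤ)) := by omega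
      have : Int.gcd ((j - i : ℕ) : ℤ) (n : ℤ) = 1 := by
        rw [e, Int.neg_gcd]
        exact hij
      rw [Int.gcd_natCast_natCast] at this
      exact this
    rw [logDist_comm]
    have h1 := DE (j - i) i
    rw [← (show j = (j - i) + i by omega)] at h1
    rw [h1]
    exact Ecop (j-i) hgcd
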